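/- Let a, b, c, x, y, z be generalized labels with a ≠ x, b ≠ y, and c ≠ z. Then at least one of the three upward triangles with (left, right, bottom) labels (x, b, c), (a, y, c), and (a, b, z) is not a valid generalized triangular puzzle piece. -/

import Mathlib

/-- Generalized labels (Knutson's labels): trees whose leaves are natural
numbers; `pair b a` represents the composed label `(b, a)`. -/
inductive GLabel where
  | nat : ℕ → GLabel
  | pair : GLabel → GLabel → GLabel
deriving DecidableEq

/-- `min` of a generalized label: `min n = n`, `min (b,a) = min a`. -/
def GLabel.minL : GLabel → ℕ
  | .nat n => n
  | .pair _ a => a.minL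

/-- `max` of a generalized label: `max n = n`, `max (b,a) = max b`. -/
def GLabel.maxL : GLabel → ℕ
  | .nat n => n
  | .pair b _ => b.maxL

/-- The actual generalized labels: every natural number is a label, and
`(b, a)` is a label whenever `a`, `b` are labels with `max a < min b`. -/
inductive GLabel.IsLabel : GLabel → Prop
  | nat (n : ℕ) : IsLabel (.nat n)
  | pair {a b : GLabel} : IsLabel a → IsLabel b → a.maxL < b.minL →
      IsLabel (.pair b a)

/-- A valid generalized triangular puzzle piece: an upward unit triangle
with (left, right, bottom) labels either `(x, x, x)` with `x ∈ ℕ`, or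
`(a, b, (b,a))` where `(b,a)` is a generalized label. -/
def ValidGPiece (l r b : GLabel) : Prop :=
  (∃ x : ℕ, l = .nat x ∧ r = .nat x ∧ b = .nat x) ∨
  (b = .pair r l ∧ GLabel.IsLabel (.pair r l))

theorem ValidGPiece.sides_eq_of_bottom_eq {l r l' r' c : GLabel}
    (h : ValidGPiece l r c) (h' : ValidGPiece l' r' c) : l = l' ∧ r = r' := by
  rcases h with ⟨n, rfl, rfl, rfl⟩ | ⟨rfl, -⟩ <;>
    rcases h' with ⟨m, rfl, rfl, h'⟩ | ⟨h', -⟩ <;>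
    cases h' <;> exact ⟨rfl, rfl⟩

theorem one_of_three_invalid_general (a b c x y z : GLabel)
    (hax : a ≠ x) :
    ¬ (ValidGPiece x b c ∧ ValidGPiece a y c ∧ ValidGPiece a b z) := by
  rintro ⟨hxbc, hayc, -⟩
  exact hax (hayc.sides_eq_of_bottom_eq hxbc).1

theorem one_of_three_invalid (a b c x y z : GLabel)
    (ha : a.IsLabel) (hb : b.IsLabel) (hc : c.IsLabel)
    (hx : x.IsLabel) (hy : y.IsLabel) (hz : z.IsLabel)
    (hax : a ≠ x) (hby : b ≠ y) (hcz : c ≠ z) :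
    ¬ (ValidGPiece x b c ∧ ValidGPiece a y c ∧ ValidGPiece a b z) :=
  one_of_three_invalid_general a b c x y z hax
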